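/- Let u ∈ V and let w ∈ V(P_u) be such that φ(χ(u,p(u))) > φ(χ(w,p(w))). Then for every vertex x in the subtree rooted at u and every k ∈ ℤ with 2^k > 6·d_T(x,w) / ( φ(χ(u,p(u))) − φ(χ(w,p(w))) ), it holds that τ_k(x) = 0. -/

import Mathlib

/-!
If `τ_k(x) ≠ 0`, the distance term of the scale selector at `x` never bound below scale `k`, so
for every `i < k` the budget term does: `τ_i(x) = φ(χ(x)) − Σ_{c ∈ χ(P_x)} τ_i(v_c)`. Let `c₁` be
the first colour of `P_x` that does not occur on `P_w`. The budget inequality at the vertex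
`v_{c₁}` shows that the colours of `P_w` together with `c₁` use at most `φ(χ(w))` of this, so
`τ_i(x) ≥ Δ − Σ_c τ_i(v_c)` with `Δ = φ(χ(x)) − φ(χ(w))`, the sum running over the remaining
fewer than `Δ` new colours. Weighting by `2^i` and summing over `i < k`, the length covered at `x`
is at least `(2^k − 2^{i_min}) Δ` minus the lengths covered at those `v_c`; each of these exceeds
its own segment `[v_{ρ(c)}, v_c]` by less than `2^{k−1}`, and the segments are disjoint pieces
of the path from `w` to `x`. Finally `2^{i_min} Δ ≤ m(T) ≤ d_T(x, w)` by the choice of `i_min`,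
which leaves `2^k (φ(χ(u)) − φ(χ(w))) ≤ 2^k Δ < 4 d_T(x, w)`.
-/

open scoped Classical

noncomputable section

/-- A finite rooted metric tree.  Each non-root vertex `v` determines the edge
`(v, parent v)`; edges are identified with their lower endpoints. -/
structure FinTree : Type 1 where
  V : Type
  fin : Fintype V
  root : V
  parent : V → V
  parent_root : parent root = root
  reaches_root : ∀ v : V, ∃ n : ℕ, parent^[n] v = root
  len : V → ℝ
  len_nonneg : ∀ v : V, 0 ≤ len v

attribute [instance] FinTree.fin

namespace FinTree

variable (T : FinTree)

/-- `u` is a (weak) ancestor of `v`. -/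
def Anc (u v : T.V) : Prop := ∃ n : ℕ, T.parent^[n] v = u

/-- The set of edges (identified with their lower endpoints) on the path `P_v`
from the root to `v`. -/
def pathToRoot (v : T.V) : Finset T.V :=
  Finset.univ.filter fun u => u ≠ T.root ∧ T.Anc u v

/-- The set of edges on the unique path between `x` and `y`. -/
def pathEdges (x y : T.V) : Finset T.V :=
  (T.pathToRoot x \ T.pathToRoot y) ∪ (T.pathToRoot y \ T.pathToRoot x)

/-- The shortest-path pseudometric `d_T` of the tree. -/
def dist (x y : T.V) : ℝ := ∑ e ∈ T.pathEdges x y, T.len e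

/-- The set of all edges of the tree. -/
def edges : Finset T.V := Finset.univ.filter fun u => u ≠ T.root

/-- The depth of a vertex (number of edges on the path to the root). -/
def depth (v : T.V) : ℕ := Nat.find (T.reaches_root v)

/-- `x` lies on the path between `a` and `b`. -/
def OnPath (x a b : T.V) : Prop := T.pathEdges a x ⊆ T.pathEdges a b

/-- `T` is the complete `k`-ary tree of height `h` with unit edge lengths. -/
def IsCompleteKAry (k h : ℕ) : Prop :=
  (∀ v : T.V, v ≠ T.root → T.len v = 1) ∧
  (∀ v : T.V, T.depth v ≤ h) ∧
  ∀ v : T.V, T.depth v < h →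
    (Finset.univ.filter fun u : T.V => T.parent u = v ∧ u ≠ v).card = k

/-- A monotone coloring: every color class is a connected subset of the edge
set of some root-leaf path. -/
def IsMonotone (χ : T.V → ℕ) : Prop :=
  ∀ u v : T.V, u ≠ T.root → v ≠ T.root → χ u = χ v →
    (T.Anc u v ∨ T.Anc v u) ∧
      ∀ w : T.V, w ≠ T.root → T.Anc u w → T.Anc w v → χ w = χ u

/-- The multiplicity `M(χ)` of a coloring. -/
def mult (χ : T.V → ℕ) : ℕ :=
  Finset.univ.sup fun v : T.V => ((T.pathToRoot v).image χ).card

/-- `len_χ(c)`: the total length of the color class of `c`. -/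
def colorLen (χ : T.V → ℕ) (c : ℕ) : ℝ :=
  ∑ e ∈ T.edges.filter (fun e => χ e = c), T.len e

/-- The set of colors `C_χ(x,y;δ)`. -/
def sigColors (χ : T.V → ℕ) (x y : T.V) (δ : ℝ) : Finset ℕ :=
  (((T.pathToRoot x).image χ \ (T.pathToRoot y).image χ) ∪
      ((T.pathToRoot y).image χ \ (T.pathToRoot x).image χ)).filter
    fun c => (∑ e ∈ (T.pathEdges x y).filter (fun e => χ e = c), T.len e) ≤ δ * T.colorLen χ c

/-- `ρ_χ(x,y;δ)`. -/
def rho (χ : T.V → ℕ) (x y : T.V) (δ : ℝ) : ℝ :=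
  ∑ c ∈ T.sigColors χ x y δ, T.colorLen χ c

/-- The topmost edge of the color class of `c` (junk value if none exists). -/
def topEdge (χ : T.V → ℕ) (c : ℕ) : T.V :=
  if h : ∃ e : T.V, e ≠ T.root ∧ χ e = c ∧ ∀ e' : T.V, e' ≠ T.root → χ e' = c → T.Anc e e'
  then h.choose else T.root

/-- `v_c`: the vertex of `γ_c` closest to the root. -/
def vcol (χ : T.V → ℕ) (c : ℕ) : T.V := T.parent (T.topEdge χ c)

/-- The edge set `E(T(c))` of the subtree under the color `c`; for the root
color `c₀` it is all of `E`. -/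
def subEdges (χ : T.V → ℕ) (c₀ c : ℕ) : Finset T.V :=
  if c = c₀ then T.edges else T.edges.filter fun e => T.Anc (T.topEdge χ c) e

/-- The parent color `ρ(c) = χ(v_c, p(v_c))`, with the convention
`χ(r,r) = c₀`. -/
def parentColor (χ : T.V → ℕ) (c₀ c : ℕ) : ℕ :=
  if T.vcol χ c = T.root then c₀ else χ (T.vcol χ c)

/-- `κ(c) = ⌊log₂(|E(T(ρ(c)))| / |E(T(c))|)⌋ + 1`. -/
def kappa (χ : T.V → ℕ) (c₀ c : ℕ) : ℤ :=
  ⌊Real.logb 2 (((T.subEdges χ c₀ (T.parentColor χ c₀ c)).card : ℝ) /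
      ((T.subEdges χ c₀ c).card : ℝ))⌋ + 1

/-- `φ(c₀) = 0` and `φ(c) = κ(c) + φ(ρ(c))`; equivalently
`φ(c) = Σ_{c' ∈ χ(E(P_{v_c})) ∪ {c}} κ(c')`. -/
def phi (χ : T.V → ℕ) (c₀ c : ℕ) : ℤ :=
  if c = c₀ then 0
  else T.kappa χ c₀ c + ∑ c' ∈ (T.pathToRoot (T.vcol χ c)).image χ, T.kappa χ c₀ c'

/-- `m(T)`: the minimum positive edge length. -/
def minLen : ℝ := sInf {x : ℝ | ∃ e : T.V, e ≠ T.root ∧ 0 < T.len e ∧ T.len e = x}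

/-- `⌊log₂( m(T) / (M(χ) + log₂|E|) )⌋`, the scale below which all `τ_i` vanish. -/
def iMin (χ : T.V → ℕ) : ℤ :=
  ⌊Real.logb 2 (T.minLen / ((T.mult χ : ℝ) + Real.logb 2 (T.edges.card : ℝ)))⌋

/-- `τ` is the family of scale selectors: `τ_i(v) = 0` for `i < iMin`, and for
`i ≥ iMin`,
`τ_i(v) = min( ⌈(d_T(v,v_c) − min(d_T(v,v_c), Σ_{j<i} 2^j τ_j(v)))/2^i⌉,
               φ(c) − Σ_{c' ∈ χ(E(P_v))} τ_i(v_{c'}) )` where `c = χ(v,p(v))`. -/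
def IsScaleSelector (χ : T.V → ℕ) (c₀ : ℕ) (τ : ℤ → T.V → ℕ) : Prop :=
  (∀ v : T.V, ∀ i : ℤ, i < T.iMin χ → τ i v = 0) ∧
  ∀ v : T.V, v ≠ T.root → ∀ i : ℤ, T.iMin χ ≤ i →
    (τ i v : ℤ) =
      min
        ⌈(T.dist v (T.vcol χ (χ v)) -
            min (T.dist v (T.vcol χ (χ v)))
              (∑ j ∈ Finset.Ico (T.iMin χ) i, (2 : ℝ) ^ j * (τ j v : ℝ))) / (2 : ℝ) ^ i⌉
        (T.phi χ c₀ (χ v) - ∑ c' ∈ (T.pathToRoot v).image χ, (τ i (T.vcol χ c') : ℤ))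

/-- The matrix `Δ_i(v) ∈ ℝ^{m×t}`. -/
def Delta (χ : T.V → ℕ) (c₀ : ℕ) (τ : ℤ → T.V → ℕ) (m t : ℕ) (i : ℤ) (v : T.V) :
    Matrix (Fin m) (Fin t) ℝ := fun j k =>
  let d : ℝ := T.dist v (T.vcol χ (χ v))
  let s : ℝ := ∑ l ∈ Finset.Ico (T.iMin χ) i, (2 : ℝ) ^ l * (τ l v : ℝ)
  let α : ℤ := ∑ c' ∈ (T.pathToRoot v).image χ, ((t : ℤ) ^ 2 * (τ i (T.vcol χ c') : ℤ))
  let β : ℤ := α + min ((t : ℤ) ^ 2 * (τ i v : ℤ)) ⌊(d - s) * (t : ℝ) ^ 2 / (2 : ℝ) ^ i⌋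
  if (k : ℕ) = 0 then
    if α < (j : ℤ) + 1 ∧ (j : ℤ) + 1 ≤ β then (2 : ℝ) ^ i / (t : ℝ) ^ 2
    else if (j : ℤ) + 1 = β + 1 ∧ β - α < (t : ℤ) ^ 2 * (τ i v : ℤ) then
      d - (s + ((β - α : ℤ) : ℝ) * ((2 : ℝ) ^ i / (t : ℝ) ^ 2))
    else 0
  else 0

end FinTree

/-- The entrywise ℓ₁ norm of a matrix. -/
def matOne {m t : ℕ} (A : Matrix (Fin m) (Fin t) ℝ) : ℝ := ∑ j, ∑ k, |A j k|

theorem sum_sub_le_of_pairwise_le {ι : Type*} {s : Finset ι} {a b : ι → ℝ} {lo hi : ℝ}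
    (hlohi : lo ≤ hi) (hab : ∀ i ∈ s, a i ≤ b i) (hlo : ∀ i ∈ s, lo ≤ a i)
    (hhi : ∀ i ∈ s, b i ≤ hi) (hsep : (s : Set ι).Pairwise fun i j => b i ≤ a j ∨ b j ≤ a i) :
    ∑ i ∈ s, (b i - a i) ≤ hi - lo := by
  have hdisj : (s : Set ι).PairwiseDisjoint fun i => Set.Ioc (a i) (b i) :=
    hsep.mono' fun i j h =>
      h.elim Set.Ioc_disjoint_Ioc_of_le fun h => (Set.Ioc_disjoint_Ioc_of_le h).symm
  have hsub : (⋃ i ∈ s, Set.Ioc (a i) (b i)) ⊆ Set.Ioc lo hi :=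
    Set.iUnion₂_subset fun i hi' => Set.Ioc_subset_Ioc (hlo i hi') (hhi i hi')
  have hvol := MeasureTheory.measure_mono (μ := MeasureTheory.volume) hsub
  simp only [MeasureTheory.measure_biUnion_finset hdisj fun i _ => measurableSet_Ioc,
    Real.volume_Ioc] at hvol
  rw [← ENNReal.ofReal_sum_of_nonneg fun i hi' => sub_nonneg.mpr (hab i hi')] at hvol
  exact (ENNReal.ofReal_le_ofReal_iff (sub_nonneg.mpr hlohi)).mp hvol

theorem sum_zpow_two_Ico {a b : ℤ} (h : a ≤ b) :
    ∑ i ∈ Finset.Ico a b, (2 : ℝ) ^ i = 2 ^ b - 2 ^ a := by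
  induction b, h using Int.leInduction with
  | base => simp
  | succ b hab ih =>
    rw [← Finset.insert_Ico_right_eq_Ico_add_one hab, Finset.sum_insert (by simp), ih,
      zpow_add_one₀ two_ne_zero]
    ring

theorem logb_card_le_logb_card {α : Type*} {s t : Finset α} (hs : 0 < s.card) (hst : s ⊆ t) :
    Real.logb 2 s.card ≤ Real.logb 2 t.card :=
  Real.logb_le_logb_of_le one_lt_two (by exact_mod_cast hs)
    (by exact_mod_cast Finset.card_le_card hst)

namespace FinTree

variable {T : FinTree}

section Ancestry

variable {u v x : T.V}

theorem anc_refl (v : T.V) : T.Anc v v := ⟨0, rfl⟩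

theorem anc_parent (v : T.V) : T.Anc (T.parent v) v := ⟨1, rfl⟩

theorem Anc.trans {w : T.V} (h₁ : T.Anc u v) (h₂ : T.Anc v w) : T.Anc u w := by
  obtain ⟨n, rfl⟩ := h₁
  obtain ⟨m, rfl⟩ := h₂
  exact ⟨n + m, Function.iterate_add_apply _ _ _ _⟩

theorem eq_root_of_anc_root (h : T.Anc v T.root) : v = T.root := by
  obtain ⟨n, rfl⟩ := h
  exact Function.iterate_fixed T.parent_root n

theorem ne_root_of_anc (h : T.Anc u v) (hu : u ≠ T.root) : v ≠ T.root := by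
  rintro rfl
  exact hu (eq_root_of_anc_root h)

theorem anc_total (hu : T.Anc u x) (hv : T.Anc v x) : T.Anc u v ∨ T.Anc v u := by
  obtain ⟨n, rfl⟩ := hu
  obtain ⟨m, rfl⟩ := hv
  rcases le_total n m with h | h
  · exact Or.inr ⟨m - n, by rw [← Function.iterate_add_apply, Nat.sub_add_cancel h]⟩
  · exact Or.inl ⟨n - m, by rw [← Function.iterate_add_apply, Nat.sub_add_cancel h]⟩

theorem anc_parent_of_ne (h : T.Anc u v) (hne : u ≠ v) : T.Anc u (T.parent v) := by
  obtain ⟨_ | n, rfl⟩ := h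
  · exact absurd rfl hne
  · exact ⟨n, (Function.iterate_succ_apply _ _ _).symm⟩

theorem Anc.parent (h : T.Anc u v) : T.Anc (T.parent u) (T.parent v) := by
  by_cases huv : u = v
  · exact huv ▸ anc_refl _
  · exact (anc_parent u).trans (anc_parent_of_ne h huv)

theorem iterate_depth (v : T.V) : T.parent^[T.depth v] v = T.root :=
  Nat.find_spec (T.reaches_root v)

theorem depth_le {n : ℕ} (h : T.parent^[n] v = T.root) : T.depth v ≤ n := Nat.find_le h

theorem depth_parent (hv : v ≠ T.root) : T.depth v = T.depth (T.parent v) + 1 := by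
  obtain ⟨n, hn⟩ : ∃ n, T.depth v = n + 1 := Nat.exists_eq_add_one.mpr <|
    Nat.pos_of_ne_zero fun h0 => hv (by simpa [h0] using iterate_depth v)
  have hle : T.depth (T.parent v) ≤ n := depth_le <| by
    rw [← Function.iterate_succ_apply, Nat.succ_eq_add_one, ← hn, iterate_depth]
  have hge : T.depth v ≤ T.depth (T.parent v) + 1 := depth_le <| by
    rw [Function.iterate_succ_apply, iterate_depth]
  omega

theorem depth_parent_le (v : T.V) : T.depth (T.parent v) ≤ T.depth v := by
  by_cases hv : v = T.root
  · rw [hv, T.parent_root]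
  · rw [depth_parent hv]
    omega

theorem Anc.depth_le (h : T.Anc u v) : T.depth u ≤ T.depth v := by
  obtain ⟨n, rfl⟩ := h
  induction n generalizing v with
  | zero => rfl
  | succ n ih => exact (Function.iterate_succ_apply _ _ _ ▸ ih).trans (depth_parent_le v)

theorem Anc.depth_lt (h : T.Anc u v) (hne : u ≠ v) : T.depth u < T.depth v := by
  have hv : v ≠ T.root := fun hv => hne (hv ▸ eq_root_of_anc_root (hv ▸ h))
  rw [depth_parent hv]
  exact Nat.lt_succ_of_le (anc_parent_of_ne h hne).depth_le

theorem not_anc_parent (hv : v ≠ T.root) : ¬ T.Anc v (T.parent v) := fun h =>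
  absurd h.depth_le (by rw [depth_parent hv]; omega)

end Ancestry

section Paths

variable {u v e : T.V}

theorem mem_pathToRoot : e ∈ T.pathToRoot v ↔ e ≠ T.root ∧ T.Anc e v := by
  simp [pathToRoot]

theorem mem_pathToRoot_self (hv : v ≠ T.root) : v ∈ T.pathToRoot v :=
  mem_pathToRoot.mpr ⟨hv, anc_refl v⟩

theorem pathToRoot_mono (h : T.Anc u v) : T.pathToRoot u ⊆ T.pathToRoot v := fun _ he =>
  mem_pathToRoot.mpr ⟨(mem_pathToRoot.mp he).1, (mem_pathToRoot.mp he).2.trans h⟩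

theorem ne_root_of_mem_pathEdges {a b : T.V} (he : e ∈ T.pathEdges a b) : e ≠ T.root := by
  rcases Finset.mem_union.mp he with h | h <;> exact (mem_pathToRoot.mp (Finset.mem_sdiff.mp h).1).1

theorem dist_nonneg (a b : T.V) : 0 ≤ T.dist a b :=
  Finset.sum_nonneg fun e _ => T.len_nonneg e

def rootDist (T : FinTree) (v : T.V) : ℝ := ∑ e ∈ T.pathToRoot v, T.len e

theorem rootDist_mono (h : T.Anc u v) : T.rootDist u ≤ T.rootDist v :=
  Finset.sum_le_sum_of_subset_of_nonneg (pathToRoot_mono h) fun e _ _ => T.len_nonneg e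

theorem dist_eq_of_anc (h : T.Anc u v) : T.dist v u = T.rootDist v - T.rootDist u := by
  rw [dist, pathEdges, Finset.sdiff_eq_empty_iff_subset.mpr (pathToRoot_mono h),
    Finset.union_empty, Finset.sum_sdiff_eq_sub (pathToRoot_mono h), rootDist, rootDist]

end Paths

section Coloring

variable {χ : T.V → ℕ} {e f : T.V}

theorem topEdge_spec (hχ : T.IsMonotone χ) (he : e ≠ T.root) :
    T.topEdge χ (χ e) ≠ T.root ∧ χ (T.topEdge χ (χ e)) = χ e ∧
      ∀ f, f ≠ T.root → χ f = χ e → T.Anc (T.topEdge χ (χ e)) f := by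
  obtain ⟨t, ht, hmin⟩ := Finset.exists_min_image
    (Finset.univ.filter fun f => f ≠ T.root ∧ χ f = χ e) T.depth ⟨e, by simp [he]⟩
  simp only [Finset.mem_filter, Finset.mem_univ, true_and] at ht hmin
  have htop : ∃ t, t ≠ T.root ∧ χ t = χ e ∧ ∀ f, f ≠ T.root → χ f = χ e → T.Anc t f := by
    refine ⟨t, ht.1, ht.2, fun f hf hfe => ?_⟩
    rcases (hχ t f ht.1 hf (ht.2.trans hfe.symm)).1 with h | h
    · exact h
    · by_contra hne
      exact absurd (hmin f ⟨hf, hfe⟩) (not_le.mpr (h.depth_lt fun hft => hne (hft ▸ anc_refl f)))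
  rw [topEdge, dif_pos htop]
  exact htop.choose_spec

theorem topEdge_ne_root (hχ : T.IsMonotone χ) (he : e ≠ T.root) : T.topEdge χ (χ e) ≠ T.root :=
  (topEdge_spec hχ he).1

theorem chi_topEdge (hχ : T.IsMonotone χ) (he : e ≠ T.root) : χ (T.topEdge χ (χ e)) = χ e :=
  (topEdge_spec hχ he).2.1

theorem topEdge_anc (hχ : T.IsMonotone χ) (he : e ≠ T.root) (hf : f ≠ T.root)
    (hfe : χ f = χ e) : T.Anc (T.topEdge χ (χ e)) f :=
  (topEdge_spec hχ he).2.2 f hf hfe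

theorem topEdge_anc_self (hχ : T.IsMonotone χ) (he : e ≠ T.root) :
    T.Anc (T.topEdge χ (χ e)) e :=
  topEdge_anc hχ he he rfl

theorem vcol_anc (hχ : T.IsMonotone χ) (he : e ≠ T.root) : T.Anc (T.vcol χ (χ e)) e :=
  (anc_parent _).trans (topEdge_anc_self hχ he)

theorem chi_eq_of_topEdge_anc (hχ : T.IsMonotone χ) (he : e ≠ T.root) (hf : f ≠ T.root)
    (htf : T.Anc (T.topEdge χ (χ e)) f) (hfe : T.Anc f e) : χ f = χ e :=
  ((hχ _ e (topEdge_ne_root hχ he) he (chi_topEdge hχ he)).2 f hf htf hfe).trans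
    (chi_topEdge hχ he)

theorem topEdge_anc_topEdge (hχ : T.IsMonotone χ) (hf : f ≠ T.root) (hfe : T.Anc f e) :
    T.Anc (T.topEdge χ (χ f)) (T.topEdge χ (χ e)) := by
  have he := ne_root_of_anc hfe hf
  rcases anc_total ((topEdge_anc_self hχ hf).trans hfe) (topEdge_anc_self hχ he) with h | h
  · exact h
  · rw [chi_eq_of_topEdge_anc hχ he hf (h.trans (topEdge_anc_self hχ hf)) hfe]
    exact anc_refl _

theorem image_pathToRoot_vcol (hχ : T.IsMonotone χ) (he : e ≠ T.root) :
    (T.pathToRoot (T.vcol χ (χ e))).image χ = ((T.pathToRoot e).image χ).erase (χ e) := by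
  ext c
  simp only [Finset.mem_erase, Finset.mem_image, mem_pathToRoot]
  constructor
  · rintro ⟨f, ⟨hf, hfv⟩, rfl⟩
    refine ⟨fun hfe => ?_, f, ⟨hf, hfv.trans (vcol_anc hχ he)⟩, rfl⟩
    exact not_anc_parent (topEdge_ne_root hχ he) ((topEdge_anc hχ he hf hfe).trans hfv)
  · rintro ⟨hne, f, ⟨hf, hfe⟩, rfl⟩
    refine ⟨f, ⟨hf, ?_⟩, rfl⟩
    rcases anc_total hfe (topEdge_anc_self hχ he) with h | h
    · refine anc_parent_of_ne h fun hft => hne ?_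
      rw [hft, chi_topEdge hχ he]
    · exact absurd (chi_eq_of_topEdge_anc hχ he hf h hfe) hne

end Coloring

section PathColors

variable {χ : T.V → ℕ} {c c₁ : ℕ} {w x : T.V}

theorem topEdge_anc_total (hχ : T.IsMonotone χ) {c' : ℕ}
    (hc : c ∈ (T.pathToRoot x).image χ) (hc' : c' ∈ (T.pathToRoot x).image χ) :
    T.Anc (T.topEdge χ c) (T.topEdge χ c') ∨ T.Anc (T.topEdge χ c') (T.topEdge χ c) := by
  obtain ⟨e, he, rfl⟩ := Finset.mem_image.mp hc
  obtain ⟨f, hf, rfl⟩ := Finset.mem_image.mp hc'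
  rw [mem_pathToRoot] at he hf
  exact anc_total ((topEdge_anc_self hχ he.1).trans he.2) ((topEdge_anc_self hχ hf.1).trans hf.2)

theorem pairwise_image_pathToRoot (hχ : T.IsMonotone χ) {r : ℕ → ℕ → Prop}
    (h : ∀ c ∈ (T.pathToRoot x).image χ, ∀ c' ∈ (T.pathToRoot x).image χ, c ≠ c' →
      T.Anc (T.topEdge χ c) (T.topEdge χ c') → r c c') :
    (((T.pathToRoot x).image χ : Finset ℕ) : Set ℕ).Pairwise fun c c' => r c c' ∨ r c' c := by
  intro c hc c' hc' hne
  rcases topEdge_anc_total hχ hc hc' with htop | htop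
  · exact Or.inl (h c hc c' hc' hne htop)
  · exact Or.inr (h c' hc' c hc (Ne.symm hne) htop)

theorem mem_image_pathToRoot_vcol (hχ : T.IsMonotone χ) {c' : ℕ}
    (hc : c ∈ (T.pathToRoot x).image χ) (hc' : c' ∈ (T.pathToRoot x).image χ)
    (htop : T.Anc (T.topEdge χ c) (T.topEdge χ c')) (hne : c ≠ c') :
    c ∈ (T.pathToRoot (T.vcol χ c')).image χ := by
  obtain ⟨e, he, rfl⟩ := Finset.mem_image.mp hc
  obtain ⟨f, hf, rfl⟩ := Finset.mem_image.mp hc'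
  have he := (mem_pathToRoot.mp he).1
  have hf := (mem_pathToRoot.mp hf).1
  rw [image_pathToRoot_vcol hχ hf]
  refine Finset.mem_erase.mpr ⟨hne, chi_topEdge hχ he ▸ Finset.mem_image_of_mem χ ?_⟩
  exact mem_pathToRoot.mpr ⟨topEdge_ne_root hχ he, htop.trans (topEdge_anc_self hχ hf)⟩

theorem topEdge_anc_topEdge_vcol (hχ : T.IsMonotone χ) {c' : ℕ}
    (hc : c ∈ (T.pathToRoot x).image χ) (hc' : c' ∈ (T.pathToRoot x).image χ)
    (htop : T.Anc (T.topEdge χ c) (T.topEdge χ c')) (hne : c ≠ c') :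
    T.vcol χ c' ≠ T.root ∧ T.Anc (T.topEdge χ c) (T.topEdge χ (χ (T.vcol χ c'))) := by
  obtain ⟨g, hg, hgc⟩ := Finset.mem_image.mp (mem_image_pathToRoot_vcol hχ hc hc' htop hne)
  obtain ⟨hg, hgv⟩ := mem_pathToRoot.mp hg
  exact ⟨ne_root_of_anc hgv hg, hgc ▸ topEdge_anc_topEdge hχ hg hgv⟩

theorem vcol_anc_vcol (hχ : T.IsMonotone χ) (hc : c ∈ (T.pathToRoot x).image χ) :
    T.Anc (T.vcol χ c) (T.vcol χ (χ x)) := by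
  obtain ⟨e, he, rfl⟩ := Finset.mem_image.mp hc
  exact (topEdge_anc_topEdge hχ (mem_pathToRoot.mp he).1 (mem_pathToRoot.mp he).2).parent

/-- The witness is the colour of the topmost edge of `P_x` whose colour does not occur on
`P_w`. -/
theorem exists_vcol_of_image_pathToRoot_sdiff_nonempty (hχ : T.IsMonotone χ) (hwx : T.Anc w x)
    (hne : ((T.pathToRoot x).image χ \ (T.pathToRoot w).image χ).Nonempty) :
    ∃ c ∈ (T.pathToRoot x).image χ \ (T.pathToRoot w).image χ, T.Anc w (T.vcol χ c) ∧
      (T.pathToRoot (T.vcol χ c)).image χ = (T.pathToRoot w).image χ := by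
  obtain ⟨z, hz, hmin⟩ := Finset.exists_min_image
    ((T.pathToRoot x).filter fun z => χ z ∉ (T.pathToRoot w).image χ) T.depth <| by
      obtain ⟨c, hc⟩ := hne
      obtain ⟨hcx, hcw⟩ := Finset.mem_sdiff.mp hc
      obtain ⟨z, hz, rfl⟩ := Finset.mem_image.mp hcx
      exact ⟨z, Finset.mem_filter.mpr ⟨hz, hcw⟩⟩
  obtain ⟨hzx, hzw⟩ := Finset.mem_filter.mp hz
  obtain ⟨hz, hzx'⟩ := mem_pathToRoot.mp hzx
  have hzw' : ¬ T.Anc z w := fun h =>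
    hzw (Finset.mem_image_of_mem χ (mem_pathToRoot.mpr ⟨hz, h⟩))
  have hwz : T.Anc w (T.parent z) :=
    anc_parent_of_ne ((anc_total hwx hzx').resolve_right hzw') fun h => hzw' (h ▸ anc_refl z)
  have hC : (T.pathToRoot (T.parent z)).image χ = (T.pathToRoot w).image χ := by
    refine (Finset.image_subset_image (pathToRoot_mono hwz)).antisymm' fun c hc => ?_
    obtain ⟨f, hf, rfl⟩ := Finset.mem_image.mp hc
    obtain ⟨hf, hfz⟩ := mem_pathToRoot.mp hf
    by_contra hfw
    have hfx : f ∈ T.pathToRoot x := mem_pathToRoot.mpr ⟨hf, hfz.trans ((anc_parent z).trans hzx')⟩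
    have := hmin f (Finset.mem_filter.mpr ⟨hfx, hfw⟩)
    have := hfz.depth_le
    have := depth_parent hz
    omega
  have htop : T.topEdge χ (χ z) = z := by
    by_contra hne
    have hmem := Finset.mem_image_of_mem χ (mem_pathToRoot.mpr
      ⟨topEdge_ne_root hχ hz, anc_parent_of_ne (topEdge_anc_self hχ hz) hne⟩)
    rw [chi_topEdge hχ hz, hC] at hmem
    exact hzw hmem
  refine ⟨χ z, Finset.mem_sdiff.mpr ⟨Finset.mem_image_of_mem χ hzx, hzw⟩, ?_⟩
  rw [vcol, htop]
  exact ⟨hwz, hC⟩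

theorem topEdge_anc_of_mem_sdiff (hχ : T.IsMonotone χ) (hc₁ : c₁ ∈ (T.pathToRoot x).image χ)
    (hC : (T.pathToRoot (T.vcol χ c₁)).image χ = (T.pathToRoot w).image χ)
    (hc : c ∈ (T.pathToRoot x).image χ \ (T.pathToRoot w).image χ) :
    T.Anc (T.topEdge χ c₁) (T.topEdge χ c) := by
  obtain ⟨hcx, hcw⟩ := Finset.mem_sdiff.mp hc
  rcases topEdge_anc_total hχ hc₁ hcx with htop | htop
  · exact htop
  · by_cases hcc₁ : c = c₁
    · exact hcc₁ ▸ anc_refl _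
    · exact absurd (hC ▸ mem_image_pathToRoot_vcol hχ hcx hc₁ htop hcc₁) hcw

end PathColors

section Phi

variable {χ : T.V → ℕ} {c₀ : ℕ} {e f x : T.V}

theorem phi_eq_sum (hχ : T.IsMonotone χ) (hc₀ : ∀ e : T.V, e ≠ T.root → χ e ≠ c₀)
    (he : e ≠ T.root) :
    T.phi χ c₀ (χ e) = ∑ c ∈ (T.pathToRoot e).image χ, T.kappa χ c₀ c := by
  rw [phi, if_neg (hc₀ e he), image_pathToRoot_vcol hχ he,
    Finset.add_sum_erase _ _ (Finset.mem_image_of_mem χ (mem_pathToRoot_self he))]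

theorem subEdges_eq (hc₀ : ∀ e : T.V, e ≠ T.root → χ e ≠ c₀) (he : e ≠ T.root) :
    T.subEdges χ c₀ (χ e) = T.edges.filter fun f => T.Anc (T.topEdge χ (χ e)) f := by
  rw [subEdges, if_neg (hc₀ e he)]

theorem card_subEdges_pos (hχ : T.IsMonotone χ) (hc₀ : ∀ e : T.V, e ≠ T.root → χ e ≠ c₀)
    (he : e ≠ T.root) : 0 < (T.subEdges χ c₀ (χ e)).card := by
  rw [subEdges_eq hc₀ he]
  exact Finset.card_pos.mpr ⟨_, Finset.mem_filter.mpr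
    ⟨Finset.mem_filter.mpr ⟨Finset.mem_univ _, topEdge_ne_root hχ he⟩, anc_refl _⟩⟩

theorem subEdges_subset_edges (c : ℕ) : T.subEdges χ c₀ c ⊆ T.edges := by
  unfold subEdges
  split
  · exact subset_rfl
  · exact Finset.filter_subset _ _

theorem subEdges_self : T.subEdges χ c₀ c₀ = T.edges := if_pos rfl

theorem subEdges_subset_subEdges (hc₀ : ∀ e : T.V, e ≠ T.root → χ e ≠ c₀) (he : e ≠ T.root)
    (hf : f ≠ T.root) (htop : T.Anc (T.topEdge χ (χ e)) (T.topEdge χ (χ f))) :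
    T.subEdges χ c₀ (χ f) ⊆ T.subEdges χ c₀ (χ e) := by
  rw [subEdges_eq hc₀ he, subEdges_eq hc₀ hf]
  intro g hg
  rw [Finset.mem_filter] at hg ⊢
  exact ⟨hg.1, htop.trans hg.2⟩

theorem subEdges_subset_parentColor (hχ : T.IsMonotone χ)
    (hc₀ : ∀ e : T.V, e ≠ T.root → χ e ≠ c₀) (he : e ≠ T.root) :
    T.subEdges χ c₀ (χ e) ⊆ T.subEdges χ c₀ (T.parentColor χ c₀ (χ e)) := by
  unfold parentColor
  split
  · exact subEdges_self (T := T) (χ := χ) ▸ subEdges_subset_edges _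
  · next hv =>
    exact subEdges_subset_subEdges hc₀ hv he ((topEdge_anc_self hχ hv).trans (anc_parent _))

theorem subEdges_parentColor_subset (hχ : T.IsMonotone χ)
    (hc₀ : ∀ e : T.V, e ≠ T.root → χ e ≠ c₀) {c c' : ℕ} (hc : c ∈ (T.pathToRoot x).image χ)
    (hc' : c' ∈ (T.pathToRoot x).image χ) (htop : T.Anc (T.topEdge χ c) (T.topEdge χ c'))
    (hne : c ≠ c') :
    T.subEdges χ c₀ (T.parentColor χ c₀ c') ⊆ T.subEdges χ c₀ c := by
  obtain ⟨hv, htop'⟩ := topEdge_anc_topEdge_vcol hχ hc hc' htop hne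
  obtain ⟨e, he, rfl⟩ := Finset.mem_image.mp hc
  rw [parentColor, if_neg hv]
  exact subEdges_subset_subEdges hc₀ (mem_pathToRoot.mp he).1 hv htop'

theorem one_le_kappa (hχ : T.IsMonotone χ) (hc₀ : ∀ e : T.V, e ≠ T.root → χ e ≠ c₀) {c : ℕ}
    (hc : c ∈ (T.pathToRoot x).image χ) : 1 ≤ T.kappa χ c₀ c := by
  obtain ⟨e, he, rfl⟩ := Finset.mem_image.mp hc
  have he := (mem_pathToRoot.mp he).1
  have hB : (0 : ℝ) < (T.subEdges χ c₀ (χ e)).card := by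
    exact_mod_cast card_subEdges_pos hχ hc₀ he
  have hBA : ((T.subEdges χ c₀ (χ e)).card : ℝ) ≤
      (T.subEdges χ c₀ (T.parentColor χ c₀ (χ e))).card := by
    exact_mod_cast Finset.card_le_card (subEdges_subset_parentColor hχ hc₀ he)
  have := Int.floor_nonneg.mpr (Real.logb_nonneg one_lt_two ((one_le_div hB).mpr hBA))
  rw [kappa]
  omega

theorem kappa_le_logb (hχ : T.IsMonotone χ) (hc₀ : ∀ e : T.V, e ≠ T.root → χ e ≠ c₀)
    (he : e ≠ T.root) :
    (T.kappa χ c₀ (χ e) : ℝ) ≤ Real.logb 2 (T.subEdges χ c₀ (T.parentColor χ c₀ (χ e))).card -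
      Real.logb 2 (T.subEdges χ c₀ (χ e)).card + 1 := by
  have hB : (0 : ℝ) < (T.subEdges χ c₀ (χ e)).card := by
    exact_mod_cast card_subEdges_pos hχ hc₀ he
  have hA : (0 : ℝ) < (T.subEdges χ c₀ (T.parentColor χ c₀ (χ e))).card :=
    hB.trans_le (by exact_mod_cast Finset.card_le_card (subEdges_subset_parentColor hχ hc₀ he))
  rw [kappa, ← Real.logb_div hA.ne' hB.ne']
  push_cast
  linarith [Int.floor_le (Real.logb 2 ((T.subEdges χ c₀ (T.parentColor χ c₀ (χ e))).card /
    (T.subEdges χ c₀ (χ e)).card : ℝ))]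

theorem phi_nonneg (hχ : T.IsMonotone χ) (hc₀ : ∀ e : T.V, e ≠ T.root → χ e ≠ c₀)
    (he : e ≠ T.root) : 0 ≤ T.phi χ c₀ (χ e) := by
  rw [phi_eq_sum hχ hc₀ he]
  exact Finset.sum_nonneg fun c hc => zero_le_one.trans (one_le_kappa hχ hc₀ hc)

theorem phi_sub_phi_eq_sum (hχ : T.IsMonotone χ) (hc₀ : ∀ e : T.V, e ≠ T.root → χ e ≠ c₀)
    (hf : f ≠ T.root) (hfe : T.Anc f e) :
    T.phi χ c₀ (χ e) - T.phi χ c₀ (χ f) =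
      ∑ c ∈ (T.pathToRoot e).image χ \ (T.pathToRoot f).image χ, T.kappa χ c₀ c := by
  rw [phi_eq_sum hχ hc₀ (ne_root_of_anc hfe hf), phi_eq_sum hχ hc₀ hf,
    Finset.sum_sdiff_eq_sub (Finset.image_subset_image (pathToRoot_mono hfe))]

theorem card_sdiff_le_phi_sub (hχ : T.IsMonotone χ) (hc₀ : ∀ e : T.V, e ≠ T.root → χ e ≠ c₀)
    (hf : f ≠ T.root) (hfe : T.Anc f e) :
    (((T.pathToRoot e).image χ \ (T.pathToRoot f).image χ).card : ℤ) ≤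
      T.phi χ c₀ (χ e) - T.phi χ c₀ (χ f) := by
  rw [phi_sub_phi_eq_sum hχ hc₀ hf hfe, Finset.card_eq_sum_ones, Nat.cast_sum, Nat.cast_one]
  exact Finset.sum_le_sum fun c hc => one_le_kappa hχ hc₀ (Finset.mem_sdiff.mp hc).1

theorem card_image_pathToRoot_le_mult (x : T.V) : ((T.pathToRoot x).image χ).card ≤ T.mult χ :=
  Finset.le_sup (f := fun v : T.V => ((T.pathToRoot v).image χ).card) (Finset.mem_univ x)

/-- The intervals `[-log₂|E(T(ρ(c)))|, -log₂|E(T(c))|]` of the colours of `P_x` are disjoint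
subintervals of `[-log₂|E|, 0]`, so the logarithmic parts of the `κ(c)` add up to `log₂|E|`. -/
theorem phi_le_mult_add_logb (hχ : T.IsMonotone χ) (hc₀ : ∀ e : T.V, e ≠ T.root → χ e ≠ c₀)
    (hx : x ≠ T.root) :
    (T.phi χ c₀ (χ x) : ℝ) ≤ T.mult χ + Real.logb 2 T.edges.card := by
  set C := (T.pathToRoot x).image χ
  set a : ℕ → ℝ := fun c => -Real.logb 2 (T.subEdges χ c₀ (T.parentColor χ c₀ c)).card
  set b : ℕ → ℝ := fun c => -Real.logb 2 (T.subEdges χ c₀ c).card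
  have hcard : ∀ c ∈ C, 0 < (T.subEdges χ c₀ c).card := fun c hc => by
    obtain ⟨e, he, rfl⟩ := Finset.mem_image.mp hc
    exact card_subEdges_pos hχ hc₀ (mem_pathToRoot.mp he).1
  have hsub : ∀ c ∈ C, T.subEdges χ c₀ c ⊆ T.subEdges χ c₀ (T.parentColor χ c₀ c) :=
    fun c hc => by
      obtain ⟨e, he, rfl⟩ := Finset.mem_image.mp hc
      exact subEdges_subset_parentColor hχ hc₀ (mem_pathToRoot.mp he).1
  have hpack : ∑ c ∈ C, (b c - a c) ≤ 0 - -Real.logb 2 T.edges.card := by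
    refine sum_sub_le_of_pairwise_le ?_ (fun c hc => ?_) (fun c hc => ?_) (fun c hc => ?_) ?_
    · exact neg_nonpos.mpr (Real.logb_nonneg one_lt_two (by
        exact_mod_cast (hcard _ (Finset.mem_image_of_mem χ (mem_pathToRoot_self hx))).trans_le
          (Finset.card_le_card (subEdges_subset_edges _))))
    · exact neg_le_neg (logb_card_le_logb_card (hcard c hc) (hsub c hc))
    · exact neg_le_neg (logb_card_le_logb_card ((hcard c hc).trans_le
        (Finset.card_le_card (hsub c hc))) (subEdges_subset_edges _))
    · exact neg_nonpos.mpr (Real.logb_nonneg one_lt_two (by exact_mod_cast hcard c hc))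
    · refine pairwise_image_pathToRoot hχ fun c hc c' hc' hne htop => neg_le_neg ?_
      exact logb_card_le_logb_card ((hcard c' hc').trans_le (Finset.card_le_card (hsub c' hc')))
        (subEdges_parentColor_subset hχ hc₀ hc hc' htop hne)
  have hκ : ∀ c ∈ C, (T.kappa χ c₀ c : ℝ) ≤ (b c - a c) + 1 := fun c hc => by
    obtain ⟨e, he, rfl⟩ := Finset.mem_image.mp hc
    linarith [kappa_le_logb hχ hc₀ (mem_pathToRoot.mp he).1]
  calc (T.phi χ c₀ (χ x) : ℝ) = ∑ c ∈ C, (T.kappa χ c₀ c : ℝ) := by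
        rw [phi_eq_sum hχ hc₀ hx]
        push_cast
        rfl
    _ ≤ ∑ c ∈ C, ((b c - a c) + 1) := Finset.sum_le_sum hκ
    _ = ∑ c ∈ C, (b c - a c) + C.card := by
        rw [Finset.sum_add_distrib, Finset.sum_const, nsmul_one]
    _ ≤ T.mult χ + Real.logb 2 T.edges.card := by
        have : (C.card : ℝ) ≤ T.mult χ := by exact_mod_cast card_image_pathToRoot_le_mult x
        linarith

end Phi

section MinLen

variable {e x : T.V}

theorem minLen_le_len (he : e ≠ T.root) (hl : 0 < T.len e) : T.minLen ≤ T.len e :=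
  csInf_le ⟨0, by rintro _ ⟨_, _, hl', rfl⟩; exact hl'.le⟩ ⟨e, he, hl, rfl⟩

theorem minLen_pos (he : e ≠ T.root) (hl : 0 < T.len e) : 0 < T.minLen := by
  obtain ⟨_, _, hl', h⟩ := Set.Nonempty.csInf_mem
    (s := {y : ℝ | ∃ e : T.V, e ≠ T.root ∧ 0 < T.len e ∧ T.len e = y}) ⟨_, e, he, hl, rfl⟩
    ((Set.finite_range T.len).subset fun _ ⟨e, _, _, h⟩ => ⟨e, h⟩)
  rw [minLen, ← h]
  exact hl'

theorem two_zpow_iMin_mul_le_minLen (χ : T.V → ℕ) (hm : 0 < T.minLen)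
    (hL : 0 < (T.mult χ : ℝ) + Real.logb 2 T.edges.card) :
    (2 : ℝ) ^ T.iMin χ * (T.mult χ + Real.logb 2 T.edges.card) ≤ T.minLen := by
  have hz := div_pos hm hL
  have hfloor := Real.floor_logb_natCast (b := 2) hz.le
  rw [Nat.cast_ofNat] at hfloor
  rw [iMin, hfloor, ← le_div_iff₀ hL]
  exact_mod_cast Int.zpow_log_le_self one_lt_two hz

theorem two_zpow_iMin_mul_phi_le_dist {χ : T.V → ℕ} {c₀ : ℕ} (hχ : T.IsMonotone χ)
    (hc₀ : ∀ e : T.V, e ≠ T.root → χ e ≠ c₀) (hx : x ≠ T.root) {a b : T.V}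
    (h : 0 < T.dist a b) : (2 : ℝ) ^ T.iMin χ * T.phi χ c₀ (χ x) ≤ T.dist a b := by
  obtain ⟨e, he, hl⟩ : ∃ e ∈ T.pathEdges a b, 0 < T.len e := by
    by_contra! hle
    exact h.not_ge (Finset.sum_nonpos hle)
  have he' := ne_root_of_mem_pathEdges he
  have hM : (1 : ℝ) ≤ T.mult χ := by
    exact_mod_cast (Finset.card_pos.mpr ⟨χ x, Finset.mem_image_of_mem χ
      (mem_pathToRoot_self hx)⟩).trans_le (card_image_pathToRoot_le_mult x)
  have hE : 0 ≤ Real.logb 2 T.edges.card := Real.logb_nonneg one_lt_two <| by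
    exact_mod_cast Finset.card_pos.mpr ⟨x, by simp [edges, hx]⟩
  calc (2 : ℝ) ^ T.iMin χ * T.phi χ c₀ (χ x)
      ≤ (2 : ℝ) ^ T.iMin χ * (T.mult χ + Real.logb 2 T.edges.card) :=
        mul_le_mul_of_nonneg_left (phi_le_mult_add_logb hχ hc₀ hx) (by positivity)
    _ ≤ T.minLen := two_zpow_iMin_mul_le_minLen χ (minLen_pos he' hl) (by linarith)
    _ ≤ T.len e := minLen_le_len he' hl
    _ ≤ T.dist a b := Finset.single_le_sum (fun f _ => T.len_nonneg f) he

end MinLen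

section ScaleSelector

variable {χ : T.V → ℕ} {c₀ : ℕ} {τ : ℤ → T.V → ℕ} {v x : T.V} {i k : ℤ}

def covered (T : FinTree) (χ : T.V → ℕ) (τ : ℤ → T.V → ℕ) (i : ℤ) (v : T.V) : ℝ :=
  ∑ j ∈ Finset.Ico (T.iMin χ) i, (2 : ℝ) ^ j * (τ j v : ℝ)

theorem covered_nonneg : 0 ≤ T.covered χ τ i v :=
  Finset.sum_nonneg fun _ _ => by positivity

theorem covered_add_one (hi : T.iMin χ ≤ i) :
    T.covered χ τ (i + 1) v = T.covered χ τ i v + 2 ^ i * τ i v := by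
  rw [covered, covered, ← Finset.insert_Ico_right_eq_Ico_add_one hi,
    Finset.sum_insert (by simp), add_comm]

theorem covered_mono (hik : i ≤ k) : T.covered χ τ i v ≤ T.covered χ τ k v :=
  Finset.sum_le_sum_of_subset_of_nonneg (Finset.Ico_subset_Ico_right hik) fun _ _ _ => by
    positivity

theorem IsScaleSelector.tau_eq (hτ : T.IsScaleSelector χ c₀ τ) (hv : v ≠ T.root)
    (hi : T.iMin χ ≤ i) :
    (τ i v : ℤ) = min
      ⌈(T.dist v (T.vcol χ (χ v)) - min (T.dist v (T.vcol χ (χ v))) (T.covered χ τ i v)) /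
        (2 : ℝ) ^ i⌉
      (T.phi χ c₀ (χ v) - ∑ c ∈ (T.pathToRoot v).image χ, (τ i (T.vcol χ c) : ℤ)) :=
  hτ.2 v hv i hi

theorem IsScaleSelector.tau_add_sum_le_phi (hτ : T.IsScaleSelector χ c₀ τ) (hv : v ≠ T.root)
    (hi : T.iMin χ ≤ i) :
    (τ i v : ℤ) + ∑ c ∈ (T.pathToRoot v).image χ, (τ i (T.vcol χ c) : ℤ) ≤ T.phi χ c₀ (χ v) := by
  linarith [(hτ.tau_eq hv hi).trans_le (min_le_right _ _)]

theorem IsScaleSelector.tau_eq_zero_of_le_covered (hτ : T.IsScaleSelector χ c₀ τ)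
    (hv : v ≠ T.root) (h : T.dist v (T.vcol χ (χ v)) ≤ T.covered χ τ i v) : τ i v = 0 := by
  rcases lt_or_ge i (T.iMin χ) with hi | hi
  · exact hτ.1 v i hi
  · have := (hτ.tau_eq hv hi).trans_le (min_le_left _ _)
    rw [min_eq_left h, sub_self, zero_div, Int.ceil_zero] at this
    omega

theorem IsScaleSelector.covered_lt_of_ne_zero (hτ : T.IsScaleSelector χ c₀ τ)
    (hv : v ≠ T.root) (hk : τ k v ≠ 0) : T.covered χ τ k v < T.dist v (T.vcol χ (χ v)) :=
  lt_of_not_ge fun h => hk (hτ.tau_eq_zero_of_le_covered hv h)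

/-- Each step overshoots the remaining distance by less than one unit `2^i`. -/
theorem IsScaleSelector.covered_le (hτ : T.IsScaleSelector χ c₀ τ) (hv : v ≠ T.root)
    (hi : T.iMin χ ≤ i) : T.covered χ τ i v ≤ T.dist v (T.vcol χ (χ v)) + 2 ^ (i - 1) := by
  induction i, hi using Int.leInduction with
  | base =>
    simp only [covered, Finset.Ico_self, Finset.sum_empty]
    linarith [T.dist_nonneg v (T.vcol χ (χ v)), zpow_pos (two_pos (α := ℝ)) (T.iMin χ - 1)]
  | succ i hi ih =>
    rw [covered_add_one hi, add_sub_cancel_right]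
    rcases le_or_gt (T.dist v (T.vcol χ (χ v))) (T.covered χ τ i v) with h | h
    · have : (2 : ℝ) ^ (i - 1) ≤ 2 ^ i := zpow_le_zpow_right₀ one_le_two (by omega)
      rw [hτ.tau_eq_zero_of_le_covered hv h, Nat.cast_zero, mul_zero]
      linarith
    · have hceil := (hτ.tau_eq hv hi).trans_le (min_le_left _ _)
      rw [min_eq_right h.le] at hceil
      have hlt : (τ i v : ℝ) < (T.dist v (T.vcol χ (χ v)) - T.covered χ τ i v) / 2 ^ i + 1 :=
        (Int.cast_le.mpr hceil).trans_lt (Int.ceil_lt_add_one _)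
      have h2 : (0 : ℝ) < 2 ^ i := by positivity
      have := mul_lt_mul_of_pos_left hlt h2
      rw [mul_add, mul_div_cancel₀ _ h2.ne', mul_one] at this
      linarith

theorem IsScaleSelector.tau_eq_of_lt (hτ : T.IsScaleSelector χ c₀ τ) (hv : v ≠ T.root)
    (hk : τ k v ≠ 0) (hi : T.iMin χ ≤ i) (hik : i < k) :
    (τ i v : ℤ) = T.phi χ c₀ (χ v) - ∑ c ∈ (T.pathToRoot v).image χ, (τ i (T.vcol χ c) : ℤ) := by
  have hcov : T.covered χ τ (i + 1) v < T.dist v (T.vcol χ (χ v)) :=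
    (covered_mono (by omega)).trans_lt (hτ.covered_lt_of_ne_zero hv hk)
  rw [hτ.tau_eq hv hi]
  refine min_eq_right (not_lt.mp fun hlt => hcov.not_ge ?_)
  have hτi := (hτ.tau_eq hv hi).trans (min_eq_left hlt.le)
  rw [covered_add_one hi] at hcov ⊢
  have h2 : (0 : ℝ) < 2 ^ i := by positivity
  have hc : T.covered χ τ i v ≤ T.dist v (T.vcol χ (χ v)) := by
    linarith [mul_nonneg h2.le (Nat.cast_nonneg (α := ℝ) (τ i v))]
  rw [min_eq_right hc] at hτi
  have := (div_le_iff₀ h2).mp ((Int.le_ceil _).trans (Int.cast_le.mpr hτi.ge))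
  push_cast at this
  linarith

theorem covered_ge_of_forall_le {S : Finset ℕ} {y : ℕ → T.V} {Δ : ℝ} (hk : T.iMin χ ≤ k)
    (h : ∀ i, T.iMin χ ≤ i → i < k → Δ - ∑ c ∈ S, (τ i (y c) : ℝ) ≤ τ i x) :
    (2 ^ k - 2 ^ T.iMin χ) * Δ - ∑ c ∈ S, T.covered χ τ k (y c) ≤ T.covered χ τ k x := by
  calc (2 ^ k - 2 ^ T.iMin χ) * Δ - ∑ c ∈ S, T.covered χ τ k (y c)
      = ∑ i ∈ Finset.Ico (T.iMin χ) k, 2 ^ i * (Δ - ∑ c ∈ S, (τ i (y c) : ℝ)) := by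
        rw [← sum_zpow_two_Ico hk, Finset.sum_mul]
        simp only [covered, mul_sub, Finset.mul_sum, Finset.sum_sub_distrib]
        rw [Finset.sum_comm]
    _ ≤ T.covered χ τ k x := Finset.sum_le_sum fun i hi =>
        mul_le_mul_of_nonneg_left (h i (Finset.mem_Ico.mp hi).1 (Finset.mem_Ico.mp hi).2)
          (by positivity)

end ScaleSelector

section Vanishing

variable {χ : T.V → ℕ} {c₀ : ℕ} {τ : ℤ → T.V → ℕ} {S : Finset ℕ} {c₁ : ℕ} {w x : T.V}
  {i k : ℤ}

/-- The segments `[v_{ρ(c)}, v_c]` of the colours below `c₁` on `P_x` are disjoint pieces of the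
segment `[v_{c₁}, v_{χ(x)}]`. -/
theorem sum_dist_vcol_le (hχ : T.IsMonotone χ) (hS : S ⊆ (T.pathToRoot x).image χ)
    (hc₁ : c₁ ∈ (T.pathToRoot x).image χ)
    (hbelow : ∀ c ∈ S, T.Anc (T.topEdge χ c₁) (T.topEdge χ c) ∧ c₁ ≠ c) :
    ∑ c ∈ S, T.dist (T.vcol χ c) (T.vcol χ (χ (T.vcol χ c))) ≤
      T.dist (T.vcol χ (χ x)) (T.vcol χ c₁) := by
  have hkey := fun c hc => topEdge_anc_topEdge_vcol hχ hc₁ (hS hc) (hbelow c hc).1 (hbelow c hc).2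
  rw [dist_eq_of_anc (vcol_anc_vcol hχ hc₁),
    Finset.sum_congr rfl fun c hc => dist_eq_of_anc (vcol_anc hχ (hkey c hc).1)]
  refine sum_sub_le_of_pairwise_le (rootDist_mono (vcol_anc_vcol hχ hc₁))
    (fun c hc => rootDist_mono (vcol_anc hχ (hkey c hc).1))
    (fun c hc => rootDist_mono (hkey c hc).2.parent)
    (fun c hc => rootDist_mono (vcol_anc_vcol hχ (hS hc))) ?_
  refine Set.Pairwise.mono (Finset.coe_subset.mpr hS) (pairwise_image_pathToRoot hχ ?_)
  exact fun c hc c' hc' hne htop =>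
    rootDist_mono (topEdge_anc_topEdge_vcol hχ hc hc' htop hne).2.parent

theorem IsScaleSelector.sum_covered_vcol_le (hτ : T.IsScaleSelector χ c₀ τ)
    (hχ : T.IsMonotone χ) (hS : S ⊆ (T.pathToRoot x).image χ)
    (hc₁ : c₁ ∈ (T.pathToRoot x).image χ)
    (hbelow : ∀ c ∈ S, T.Anc (T.topEdge χ c₁) (T.topEdge χ c) ∧ c₁ ≠ c) (hk : T.iMin χ ≤ k) :
    ∑ c ∈ S, T.covered χ τ k (T.vcol χ c) ≤
      T.dist (T.vcol χ (χ x)) (T.vcol χ c₁) + S.card * 2 ^ (k - 1) := by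
  calc ∑ c ∈ S, T.covered χ τ k (T.vcol χ c)
      ≤ ∑ c ∈ S, (T.dist (T.vcol χ c) (T.vcol χ (χ (T.vcol χ c))) + 2 ^ (k - 1)) :=
        Finset.sum_le_sum fun c hc => hτ.covered_le
          (topEdge_anc_topEdge_vcol hχ hc₁ (hS hc) (hbelow c hc).1 (hbelow c hc).2).1 hk
    _ ≤ T.dist (T.vcol χ (χ x)) (T.vcol χ c₁) + S.card * 2 ^ (k - 1) := by
        rw [Finset.sum_add_distrib, Finset.sum_const, nsmul_eq_mul]
        linarith [sum_dist_vcol_le hχ hS hc₁ hbelow]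

/-- Below scale `k` the budget of `x` binds, and by the budget inequality at `v_{c₁}` the
colours of `P_w` together with `c₁` use at most `φ(χ(w))` of it. -/
theorem IsScaleSelector.phi_sub_sum_le_tau (hτ : T.IsScaleSelector χ c₀ τ) (hχ : T.IsMonotone χ)
    (hc₀ : ∀ e : T.V, e ≠ T.root → χ e ≠ c₀) (hw : w ≠ T.root) (hwx : T.Anc w x)
    (hc₁ : c₁ ∈ (T.pathToRoot x).image χ \ (T.pathToRoot w).image χ)
    (hwy : T.Anc w (T.vcol χ c₁))
    (hC : (T.pathToRoot (T.vcol χ c₁)).image χ = (T.pathToRoot w).image χ)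
    (hk : τ k x ≠ 0) (hi : T.iMin χ ≤ i) (hik : i < k) :
    T.phi χ c₀ (χ x) - T.phi χ c₀ (χ w) -
        ∑ c ∈ ((T.pathToRoot x).image χ \ (T.pathToRoot w).image χ).erase c₁,
          (τ i (T.vcol χ c) : ℤ) ≤ τ i x := by
  have hy := ne_root_of_anc hwy hw
  have hbind := hτ.tau_eq_of_lt (ne_root_of_anc hwx hw) hk hi hik
  have hbudget := hτ.tau_add_sum_le_phi hy hi
  have hphi : T.phi χ c₀ (χ (T.vcol χ c₁)) = T.phi χ c₀ (χ w) := by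
    rw [phi_eq_sum hχ hc₀ hy, phi_eq_sum hχ hc₀ hw, hC]
  rw [hphi, hC] at hbudget
  rw [← Finset.sum_sdiff (Finset.image_subset_image (pathToRoot_mono hwx)),
    ← Finset.add_sum_erase _ _ hc₁] at hbind
  linarith

theorem IsScaleSelector.exists_covered_ge (hτ : T.IsScaleSelector χ c₀ τ) (hχ : T.IsMonotone χ)
    (hc₀ : ∀ e : T.V, e ≠ T.root → χ e ≠ c₀) (hw : w ≠ T.root) (hwx : T.Anc w x)
    (hφ : T.phi χ c₀ (χ w) < T.phi χ c₀ (χ x)) (hk : τ k x ≠ 0) :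
    ∃ y, T.Anc w y ∧ T.Anc y (T.vcol χ (χ x)) ∧
      ((2 : ℝ) ^ k - 2 ^ T.iMin χ) * ((T.phi χ c₀ (χ x) - T.phi χ c₀ (χ w) : ℤ) : ℝ) -
        T.dist (T.vcol χ (χ x)) y -
        (((T.phi χ c₀ (χ x) - T.phi χ c₀ (χ w) : ℤ) : ℝ) - 1) * 2 ^ (k - 1) ≤
      T.covered χ τ k x := by
  have hkm : T.iMin χ ≤ k := not_lt.mp fun h => hk (hτ.1 x k h)
  have hne : ((T.pathToRoot x).image χ \ (T.pathToRoot w).image χ).Nonempty := by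
    refine Finset.nonempty_iff_ne_empty.mpr fun h => hφ.ne' ?_
    rw [← sub_eq_zero, phi_sub_phi_eq_sum hχ hc₀ hw hwx, h, Finset.sum_empty]
  obtain ⟨c₁, hc₁, hwy, hC⟩ := exists_vcol_of_image_pathToRoot_sdiff_nonempty hχ hwx hne
  have hc₁x := (Finset.mem_sdiff.mp hc₁).1
  have hcard := card_sdiff_le_phi_sub hχ hc₀ hw hwx
  rw [← Finset.card_erase_add_one hc₁] at hcard
  set S := ((T.pathToRoot x).image χ \ (T.pathToRoot w).image χ).erase c₁
  set Δ : ℤ := T.phi χ c₀ (χ x) - T.phi χ c₀ (χ w)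
  replace hcard : (S.card : ℝ) ≤ Δ - 1 := by
    rw [le_sub_iff_add_le]
    exact_mod_cast hcard
  have hcov := covered_ge_of_forall_le (Δ := Δ) (S := S) (y := T.vcol χ) (x := x) hkm
    fun i hi hik => by exact_mod_cast hτ.phi_sub_sum_le_tau hχ hc₀ hw hwx hc₁ hwy hC hk hi hik
  have hsum := hτ.sum_covered_vcol_le (S := S) hχ
    (fun c hc => (Finset.mem_sdiff.mp (Finset.mem_of_mem_erase hc)).1) hc₁x
    (fun c hc => ⟨topEdge_anc_of_mem_sdiff hχ hc₁x hC (Finset.mem_of_mem_erase hc),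
      (Finset.ne_of_mem_erase hc).symm⟩) hkm
  refine ⟨T.vcol χ c₁, hwy, vcol_anc_vcol hχ hc₁x, ?_⟩
  linarith [mul_le_mul_of_nonneg_right hcard (by positivity : (0 : ℝ) ≤ 2 ^ (k - 1))]

theorem IsScaleSelector.two_zpow_mul_phi_sub_lt (hτ : T.IsScaleSelector χ c₀ τ)
    (hχ : T.IsMonotone χ) (hc₀ : ∀ e : T.V, e ≠ T.root → χ e ≠ c₀) (hw : w ≠ T.root)
    (hwx : T.Anc w x) (hφ : T.phi χ c₀ (χ w) < T.phi χ c₀ (χ x)) (hk : τ k x ≠ 0) :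
    (2 : ℝ) ^ k * ((T.phi χ c₀ (χ x) - T.phi χ c₀ (χ w) : ℤ) : ℝ) < 4 * T.dist x w := by
  have hx := ne_root_of_anc hwx hw
  obtain ⟨y, hwy, hyx, hcov⟩ := hτ.exists_covered_ge hχ hc₀ hw hwx hφ hk
  have hlt := hτ.covered_lt_of_ne_zero hx hk
  have hdist : T.dist x (T.vcol χ (χ x)) + T.dist (T.vcol χ (χ x)) y ≤ T.dist x w := by
    rw [dist_eq_of_anc (vcol_anc hχ hx), dist_eq_of_anc hyx, dist_eq_of_anc hwx]
    linarith [rootDist_mono hwy]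
  have hpos : 0 < T.dist x w := by
    linarith [covered_nonneg (T := T) (χ := χ) (τ := τ) (i := k) (v := x),
      T.dist_nonneg (T.vcol χ (χ x)) y]
  have hΔ : ((T.phi χ c₀ (χ x) - T.phi χ c₀ (χ w) : ℤ) : ℝ) ≤ T.phi χ c₀ (χ x) := by
    have : (0 : ℝ) ≤ T.phi χ c₀ (χ w) := by exact_mod_cast phi_nonneg hχ hc₀ hw
    push_cast
    linarith
  have hmin := (mul_le_mul_of_nonneg_left hΔ (by positivity : (0 : ℝ) ≤ 2 ^ T.iMin χ)).trans
    (two_zpow_iMin_mul_phi_le_dist hχ hc₀ hx hpos)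
  have hP : (0 : ℝ) < 2 ^ (k - 1) := by positivity
  rw [show (2 : ℝ) ^ k = 2 * 2 ^ (k - 1) by rw [← zpow_one_add₀ two_ne_zero, add_sub_cancel]]
    at hcov ⊢
  linear_combination 2 * (hcov + hlt + hdist + hmin + hP)

end Vanishing

end FinTree

theorem tau_eq_zero_of_phi_jump_general (T : FinTree) (χ : T.V → ℕ) (hχ : T.IsMonotone χ)
    (c₀ : ℕ) (hc₀ : ∀ e : T.V, e ≠ T.root → χ e ≠ c₀)
    (τ : ℤ → T.V → ℕ) (hτ : T.IsScaleSelector χ c₀ τ)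
    (u w : T.V) (hw : w ≠ T.root) (hwu : T.Anc w u)
    (hφ : T.phi χ c₀ (χ w) < T.phi χ c₀ (χ u))
    (x : T.V) (hx : T.Anc u x) (k : ℤ)
    (hk : 6 * T.dist x w / (((T.phi χ c₀ (χ u) - T.phi χ c₀ (χ w) : ℤ)) : ℝ) < (2 : ℝ) ^ k) :
    τ k x = 0 := by
  by_contra hk0
  have hux := FinTree.card_sdiff_le_phi_sub hχ hc₀ (FinTree.ne_root_of_anc hwu hw) hx
  have hjump := hτ.two_zpow_mul_phi_sub_lt hχ hc₀ hw (hwu.trans hx) (by omega) hk0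
  have hΔ : (0 : ℝ) < ((T.phi χ c₀ (χ u) - T.phi χ c₀ (χ w) : ℤ) : ℝ) := by
    exact_mod_cast sub_pos.mpr hφ
  have hmono : ((T.phi χ c₀ (χ u) - T.phi χ c₀ (χ w) : ℤ) : ℝ) ≤
      ((T.phi χ c₀ (χ x) - T.phi χ c₀ (χ w) : ℤ) : ℝ) := by
    exact_mod_cast (by omega : T.phi χ c₀ (χ u) - T.phi χ c₀ (χ w) ≤ _)
  rw [div_lt_iff₀ hΔ] at hk
  linarith [mul_le_mul_of_nonneg_left hmono (by positivity : (0 : ℝ) ≤ 2 ^ k),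
    T.dist_nonneg x w]

/-- Lemma on vanishing of `τ_k` below a vertex whose `φ`-value jumps. -/
theorem tau_eq_zero_of_phi_jump (T : FinTree) (χ : T.V → ℕ) (hχ : T.IsMonotone χ)
    (c₀ : ℕ) (hc₀ : ∀ e : T.V, e ≠ T.root → χ e ≠ c₀)
    (hpos : ∃ e : T.V, e ≠ T.root ∧ 0 < T.len e)
    (τ : ℤ → T.V → ℕ) (hτ : T.IsScaleSelector χ c₀ τ)
    (u w : T.V) (hu : u ≠ T.root) (hw : w ≠ T.root) (hwu : T.Anc w u)
    (hφ : T.phi χ c₀ (χ w) < T.phi χ c₀ (χ u))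
    (x : T.V) (hx : T.Anc u x) (k : ℤ)
    (hk : 6 * T.dist x w / (((T.phi χ c₀ (χ u) - T.phi χ c₀ (χ w) : ℤ)) : ℝ) < (2 : ℝ) ^ k) :
    τ k x = 0 :=
  tau_eq_zero_of_phi_jump_general T χ hχ c₀ hc₀ τ hτ u w hw hwu hφ x hx k hk
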